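/- arXiv:2211.07012 — 5 statements merged into one kernel-verified Lean document; each statement's English description precedes it below -/
import Mathlib

section
/- Let v₁, v₂, q be polynomials in two real variables and set v = (v₁, v₂). Let p, d, n ∈ ℝ² with d ≠ 0, n ≠ 0 and d·n = 0. Assume that for every t ∈ [0,1] one has v(p + t d) = 0, (n·∇)v(p + t d) = 0 and (n·∇)²v(p + t d) = 0, where (n·∇) denotes the directional derivative along n applied to each component. Assume moreover that −Δv + ∇q = 0 and div v = 0 hold identically on ℝ². Then v₁ and v₂ are identically zero and q is a constant polynomial. -/
open MvPolynomial

/-- The directional derivative `(n·∇)f = n₀ ∂f/∂x + n₁ ∂f/∂y` of a polynomial in two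
variables along the direction `n ∈ ℝ²`. -/
noncomputable def dirDeriv (n : Fin 2 → ℝ) (f : MvPolynomial (Fin 2) ℝ) :
    MvPolynomial (Fin 2) ℝ :=
  C (n 0) * pderiv 0 f + C (n 1) * pderiv 1 f

/-!
Let `L = p + ℝ d`. A polynomial vanishing on the segment vanishes on `L`, and tangential
derivatives `∂_d` preserve vanishing on `L`. In the orthogonal frame `(d, n)` the Laplacian is
`|d|⁻² ∂_d² + |n|⁻² ∂_n²`, so for a harmonic `f` with `f` and `∂_n f` vanishing on `L`, all normal
derivatives `∂_nᵏ f` vanish on `L`; thus `f` vanishes on every normal line through `L`, i.e.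
`f = 0`. The vorticity `ω = ∂ₓv₂ - ∂ᵧv₁` is harmonic since `Δv = ∇q`, and `ω`, `∂_n ω` vanish
on `L` because the full gradients of `v` and `∂_n v` do, so `ω = 0`. Then `Δv = ∇(div v) - ∇^⊥ω`
vanishes, the same uniqueness gives `v = 0`, and `∇q = Δv = 0`.
-/

theorem MvPolynomial.pderiv_pderiv_comm {R σ : Type*} [CommRing R] (i j : σ)
    (f : MvPolynomial σ R) : pderiv i (pderiv j f) = pderiv j (pderiv i f) := by
  have h : ⁅pderiv i, pderiv j⁆ = (0 : Derivation R (MvPolynomial σ R) (MvPolynomial σ R)) :=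
    derivation_ext fun k => by
      classical
      rw [Derivation.commutator_apply]
      simp [pderiv_X, Pi.single_apply, apply_ite]
  rw [← sub_eq_zero, ← Derivation.commutator_apply, h, Derivation.zero_apply]

theorem MvPolynomial.eq_C_of_forall_pderiv_eq_zero {R σ : Type*} [CommRing R] [IsDomain R]
    [CharZero R] {f : MvPolynomial σ R} (h : ∀ i, pderiv i f = 0) : f = C (coeff 0 f) := by
  classical
  ext m
  rcases eq_or_ne m 0 with rfl | hm
  · simp
  obtain ⟨i, hi⟩ : ∃ i, m i ≠ 0 := by simpa [Finsupp.ext_iff] using hm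
  have hle : Finsupp.single i 1 ≤ m := Finsupp.single_le_iff.mpr (Nat.one_le_iff_ne_zero.mpr hi)
  have hcoeff := congrArg (coeff (m - Finsupp.single i 1)) (h i)
  rw [coeff_pderiv, tsub_add_cancel_of_le hle, coeff_zero] at hcoeff
  rw [coeff_C, if_neg (Ne.symm hm)]
  exact (mul_eq_zero.mp hcoeff).resolve_right (Nat.cast_add_one_ne_zero _)

theorem MvPolynomial.C_mul_mem_ideal_iff {R σ : Type*} [Field R] {I : Ideal (MvPolynomial σ R)}
    {a : R} (ha : a ≠ 0) {f : MvPolynomial σ R} : C a * f ∈ I ↔ f ∈ I :=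
  I.unit_mul_mem_iff_mem ((IsUnit.mk0 a ha).map C)

theorem Polynomial.eq_zero_of_forall_iterate_derivative_eval_zero {R : Type*} [CommRing R]
    [IsDomain R] [CharZero R] {P : Polynomial R}
    (h : ∀ k, (Polynomial.derivative^[k] P).eval 0 = 0) : P = 0 := by
  ext k
  have hk := Polynomial.coeff_iterate_derivative (k := k) P 0
  rw [Polynomial.coeff_zero_eq_eval_zero, h, zero_add, Nat.descFactorial_self,
    nsmul_eq_mul] at hk
  simpa [Nat.factorial_ne_zero] using hk.symm

theorem exists_eq_add_mul_add_mul {d n : Fin 2 → ℝ} (hd : d ≠ 0) (hn : n ≠ 0)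
    (hdn : d ⬝ᵥ n = 0) (p x : Fin 2 → ℝ) :
    ∃ s t : ℝ, x = fun i => p i + s * d i + t * n i := by
  have hdd := dotProduct_self_eq_zero.not.mpr hd
  have hnn := dotProduct_self_eq_zero.not.mpr hn
  refine ⟨(x - p) ⬝ᵥ d / (d ⬝ᵥ d), (x - p) ⬝ᵥ n / (n ⬝ᵥ n), funext fun i => ?_⟩
  simp only [dotProduct, Fin.sum_univ_two, Pi.sub_apply, ← sq] at hdd hnn hdn ⊢
  fin_cases i <;> simp only [Fin.zero_eta, Fin.mk_one] <;> field_simp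
  · linear_combination ((x 0 - p 0) * (d 1 * n 1 - d 0 * n 0)
      - (x 1 - p 1) * (d 1 * n 0 + d 0 * n 1)) * hdn
  · linear_combination ((x 1 - p 1) * (d 0 * n 0 - d 1 * n 1)
      - (x 0 - p 0) * (d 1 * n 0 + d 0 * n 1)) * hdn

namespace PlanarPolynomial

noncomputable def restrictLine {σ R : Type*} [CommSemiring R] (p d : σ → R) :
    MvPolynomial σ R →ₐ[R] Polynomial R :=
  aeval fun i => Polynomial.C (p i) + Polynomial.C (d i) * Polynomial.X

theorem eval_restrictLine {σ R : Type*} [CommSemiring R] (p d : σ → R) (f : MvPolynomial σ R)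
    (t : R) : (restrictLine p d f).eval t = eval (fun i => p i + t * d i) f := by
  rw [← Polynomial.coe_aeval_eq_eval, restrictLine, comp_aeval_apply, ← coe_aeval_eq_eval]
  exact congrArg (aeval · f) (funext fun i => by
    rw [map_add, map_mul, Polynomial.aeval_C, Polynomial.aeval_C, Polynomial.aeval_X]
    simp [mul_comm])

noncomputable def lineIdeal {σ R : Type*} [CommSemiring R] (p d : σ → R) :
    Ideal (MvPolynomial σ R) :=
  RingHom.ker (restrictLine p d)

theorem mem_lineIdeal_of_forall_Icc {p d : Fin 2 → ℝ} {f : MvPolynomial (Fin 2) ℝ}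
    (h : ∀ t ∈ Set.Icc (0 : ℝ) 1, eval (fun i => p i + t * d i) f = 0) : f ∈ lineIdeal p d :=
  Polynomial.eq_zero_of_infinite_isRoot _ <| (Set.Icc_infinite zero_lt_one).mono fun t ht => by
    simpa [eval_restrictLine] using h t ht

theorem dirDeriv_add (n : Fin 2 → ℝ) (f g : MvPolynomial (Fin 2) ℝ) :
    dirDeriv n (f + g) = dirDeriv n f + dirDeriv n g := by
  simp only [dirDeriv, map_add]; ring

theorem dirDeriv_sub (n : Fin 2 → ℝ) (f g : MvPolynomial (Fin 2) ℝ) :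
    dirDeriv n (f - g) = dirDeriv n f - dirDeriv n g := by
  simp only [dirDeriv, map_sub]; ring

theorem dirDeriv_mul (n : Fin 2 → ℝ) (f g : MvPolynomial (Fin 2) ℝ) :
    dirDeriv n (f * g) = dirDeriv n f * g + f * dirDeriv n g := by
  simp only [dirDeriv, Derivation.leibniz, smul_eq_mul]; ring

@[simp] theorem dirDeriv_C (n : Fin 2 → ℝ) (a : ℝ) : dirDeriv n (C a) = 0 := by
  simp [dirDeriv]

theorem dirDeriv_X (n : Fin 2 → ℝ) (i : Fin 2) : dirDeriv n (X i) = C (n i) := by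
  fin_cases i <;> simp [dirDeriv, pderiv_X]

theorem pderiv_dirDeriv (n : Fin 2 → ℝ) (i : Fin 2) (f : MvPolynomial (Fin 2) ℝ) :
    pderiv i (dirDeriv n f) = dirDeriv n (pderiv i f) := by
  simp only [dirDeriv, map_add, pderiv_C_mul, pderiv_pderiv_comm i]

theorem derivative_restrictLine (p d : Fin 2 → ℝ) (f : MvPolynomial (Fin 2) ℝ) :
    Polynomial.derivative (restrictLine p d f) = restrictLine p d (dirDeriv d f) := by
  induction f using MvPolynomial.induction_on with
  | C a => simp [restrictLine]
  | add f g hf hg => simp only [map_add, dirDeriv_add, hf, hg]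
  | mul_X f i hf =>
    rw [map_mul, Polynomial.derivative_mul, hf, dirDeriv_mul, dirDeriv_X, map_add, map_mul,
      map_mul]
    simp [restrictLine]

theorem dirDeriv_mem_lineIdeal {p d : Fin 2 → ℝ} {f : MvPolynomial (Fin 2) ℝ}
    (hf : f ∈ lineIdeal p d) : dirDeriv d f ∈ lineIdeal p d := by
  rw [lineIdeal, RingHom.mem_ker] at hf ⊢
  rw [← derivative_restrictLine, hf, map_zero]

noncomputable def laplacian (f : MvPolynomial (Fin 2) ℝ) : MvPolynomial (Fin 2) ℝ :=
  pderiv 0 (pderiv 0 f) + pderiv 1 (pderiv 1 f)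

theorem laplacian_pderiv (i : Fin 2) (f : MvPolynomial (Fin 2) ℝ) :
    laplacian (pderiv i f) = pderiv i (laplacian f) := by
  simp only [laplacian, map_add, pderiv_pderiv_comm i]

theorem laplacian_dirDeriv (n : Fin 2 → ℝ) (f : MvPolynomial (Fin 2) ℝ) :
    laplacian (dirDeriv n f) = dirDeriv n (laplacian f) := by
  simp only [laplacian, pderiv_dirDeriv, dirDeriv_add]

section OrthogonalFrame

variable {d n : Fin 2 → ℝ} (hdn : d ⬝ᵥ n = 0) (f : MvPolynomial (Fin 2) ℝ)
include hdn

theorem C_mul_pderiv_eq_of_dotProduct_eq_zero (i : Fin 2) :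
    C ((d ⬝ᵥ d) * (n ⬝ᵥ n)) * pderiv i f =
      C ((n ⬝ᵥ n) * d i) * dirDeriv d f + C ((d ⬝ᵥ d) * n i) * dirDeriv n f := by
  have h : C (d 0 * n 0 + d 1 * n 1) = (0 : MvPolynomial (Fin 2) ℝ) := by
    simpa [dotProduct, Fin.sum_univ_two] using congrArg C hdn
  simp only [dirDeriv, dotProduct, Fin.sum_univ_two, map_add, map_mul] at h ⊢
  fin_cases i <;> simp only [Fin.zero_eta, Fin.mk_one]
  · linear_combination ((C (d 1) * C (n 1) - C (d 0) * C (n 0)) * pderiv 0 f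
      - (C (d 1) * C (n 0) + C (d 0) * C (n 1)) * pderiv 1 f) * h
  · linear_combination ((C (d 0) * C (n 0) - C (d 1) * C (n 1)) * pderiv 1 f
      - (C (d 1) * C (n 0) + C (d 0) * C (n 1)) * pderiv 0 f) * h

theorem C_mul_laplacian_eq_of_dotProduct_eq_zero :
    C ((d ⬝ᵥ d) * (n ⬝ᵥ n)) * laplacian f =
      C (n ⬝ᵥ n) * dirDeriv d (dirDeriv d f) + C (d ⬝ᵥ d) * dirDeriv n (dirDeriv n f) := by
  have h : C (d 0 * n 0 + d 1 * n 1) = (0 : MvPolynomial (Fin 2) ℝ) := by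
    simpa [dotProduct, Fin.sum_univ_two] using congrArg C hdn
  simp only [laplacian, dirDeriv, dotProduct, Fin.sum_univ_two, map_add, map_mul,
    pderiv_C_mul] at h ⊢
  rw [pderiv_pderiv_comm 1 0 f]
  linear_combination -((C (d 0) * C (n 0) - C (d 1) * C (n 1)) * pderiv 0 (pderiv 0 f)
    + (C (d 1) * C (n 1) - C (d 0) * C (n 0)) * pderiv 1 (pderiv 1 f)
    + 2 * (C (d 1) * C (n 0) + C (d 0) * C (n 1)) * pderiv 0 (pderiv 1 f)) * h

end OrthogonalFrame

section Uniqueness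

variable {p d n : Fin 2 → ℝ} (hd : d ≠ 0) (hn : n ≠ 0) (hdn : d ⬝ᵥ n = 0)
  {f : MvPolynomial (Fin 2) ℝ}
include hd hdn

include hn in
theorem pderiv_mem_lineIdeal (h₀ : f ∈ lineIdeal p d) (h₁ : dirDeriv n f ∈ lineIdeal p d)
    (i : Fin 2) : pderiv i f ∈ lineIdeal p d := by
  have hdn_ne : (d ⬝ᵥ d) * (n ⬝ᵥ n) ≠ 0 :=
    mul_ne_zero (dotProduct_self_eq_zero.not.mpr hd) (dotProduct_self_eq_zero.not.mpr hn)
  rw [← C_mul_mem_ideal_iff hdn_ne, C_mul_pderiv_eq_of_dotProduct_eq_zero hdn]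
  exact add_mem (Ideal.mul_mem_left _ _ (dirDeriv_mem_lineIdeal h₀)) (Ideal.mul_mem_left _ _ h₁)

theorem iterate_dirDeriv_mem_lineIdeal (hf : laplacian f = 0) (h₀ : f ∈ lineIdeal p d)
    (h₁ : dirDeriv n f ∈ lineIdeal p d) : ∀ k, (dirDeriv n)^[k] f ∈ lineIdeal p d
  | 0 => h₀
  | 1 => h₁
  | k + 2 => by
    set g := (dirDeriv n)^[k] f
    have hg : laplacian g = 0 := by
      rw [(Function.Commute.iterate_right (laplacian_dirDeriv n) k f), hf]
      exact Function.iterate_fixed (by simp [dirDeriv]) k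
    -- For harmonic `g` the frame identity reads `|d|² ∂ₙ² g = -|n|² ∂_d² g`.
    have hframe := C_mul_laplacian_eq_of_dotProduct_eq_zero hdn g
    rw [hg, mul_zero] at hframe
    rw [Function.iterate_succ_apply', Function.iterate_succ_apply',
      ← C_mul_mem_ideal_iff (dotProduct_self_eq_zero.not.mpr hd),
      eq_neg_of_add_eq_zero_right hframe.symm]
    exact neg_mem <| Ideal.mul_mem_left _ _ <| dirDeriv_mem_lineIdeal <|
      dirDeriv_mem_lineIdeal <| iterate_dirDeriv_mem_lineIdeal hf h₀ h₁ k

include hn in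
theorem eq_zero_of_forall_iterate_dirDeriv_mem_lineIdeal
    (h : ∀ k, (dirDeriv n)^[k] f ∈ lineIdeal p d) : f = 0 := by
  refine MvPolynomial.funext fun x => ?_
  obtain ⟨s, t, rfl⟩ := exists_eq_add_mul_add_mul hd hn hdn p x
  have hrestrict : restrictLine (fun i => p i + s * d i) n f = 0 := by
    refine Polynomial.eq_zero_of_forall_iterate_derivative_eval_zero fun k => ?_
    have hsemiconj : Function.Semiconj (restrictLine (fun i => p i + s * d i) n) (dirDeriv n)
        Polynomial.derivative := fun g => (derivative_restrictLine _ n g).symm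
    rw [← hsemiconj.iterate_right k f, eval_restrictLine]
    simpa [← eval_restrictLine] using congrArg (Polynomial.eval s) (RingHom.mem_ker.mp (h k))
  simpa [eval_restrictLine] using congrArg (Polynomial.eval t) hrestrict

include hn in
theorem eq_zero_of_laplacian_eq_zero (hf : laplacian f = 0) (h₀ : f ∈ lineIdeal p d)
    (h₁ : dirDeriv n f ∈ lineIdeal p d) : f = 0 :=
  eq_zero_of_forall_iterate_dirDeriv_mem_lineIdeal hd hn hdn
    (iterate_dirDeriv_mem_lineIdeal hd hdn hf h₀ h₁)

end Uniqueness

noncomputable def divergence (v₁ v₂ : MvPolynomial (Fin 2) ℝ) : MvPolynomial (Fin 2) ℝ :=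
  pderiv 0 v₁ + pderiv 1 v₂

noncomputable def curl (v₁ v₂ : MvPolynomial (Fin 2) ℝ) : MvPolynomial (Fin 2) ℝ :=
  pderiv 0 v₂ - pderiv 1 v₁

section VectorCalculus

variable (v₁ v₂ : MvPolynomial (Fin 2) ℝ)

theorem curl_pderiv (q : MvPolynomial (Fin 2) ℝ) : curl (pderiv 0 q) (pderiv 1 q) = 0 := by
  rw [curl, pderiv_pderiv_comm, sub_self]

theorem laplacian_curl : laplacian (curl v₁ v₂) = curl (laplacian v₁) (laplacian v₂) := by
  rw [curl, curl, ← laplacian_pderiv, ← laplacian_pderiv]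
  simp only [laplacian, map_sub]
  abel

theorem dirDeriv_curl (n : Fin 2 → ℝ) :
    dirDeriv n (curl v₁ v₂) = curl (dirDeriv n v₁) (dirDeriv n v₂) := by
  simp only [curl, dirDeriv_sub, pderiv_dirDeriv]

theorem laplacian_eq_pderiv_divergence_sub_pderiv_curl :
    laplacian v₁ = pderiv 0 (divergence v₁ v₂) - pderiv 1 (curl v₁ v₂) := by
  simp only [laplacian, divergence, curl, map_add, map_sub, pderiv_pderiv_comm (1 : Fin 2) 0]
  ring

theorem laplacian_eq_pderiv_divergence_add_pderiv_curl :
    laplacian v₂ = pderiv 1 (divergence v₁ v₂) + pderiv 0 (curl v₁ v₂) := by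
  simp only [laplacian, divergence, curl, map_add, map_sub, pderiv_pderiv_comm (1 : Fin 2) 0]
  ring

end VectorCalculus

theorem curl_mem_lineIdeal {p d n : Fin 2 → ℝ} (hd : d ≠ 0) (hn : n ≠ 0) (hdn : d ⬝ᵥ n = 0)
    {v₁ v₂ : MvPolynomial (Fin 2) ℝ} (h₁ : v₁ ∈ lineIdeal p d) (h₂ : v₂ ∈ lineIdeal p d)
    (h₁' : dirDeriv n v₁ ∈ lineIdeal p d) (h₂' : dirDeriv n v₂ ∈ lineIdeal p d) :
    curl v₁ v₂ ∈ lineIdeal p d :=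
  sub_mem (pderiv_mem_lineIdeal hd hn hdn h₂ h₂' 0) (pderiv_mem_lineIdeal hd hn hdn h₁ h₁' 1)

end PlanarPolynomial

open PlanarPolynomial

/-- Lemma 3.1 of the paper (2D case): if a polynomial velocity field `v = (v₁, v₂)` vanishes
together with its first and second normal derivatives on a segment `{p + t d : t ∈ [0,1]}`
(with normal direction `n ⊥ d`), and `−Δv + ∇q = 0`, `div v = 0` hold identically, then
`v = 0` and `q` is constant. -/
theorem polynomial_stokes_vanishing_on_edge
    (v₁ v₂ q : MvPolynomial (Fin 2) ℝ) (p d n : Fin 2 → ℝ)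
    (hd : d ≠ 0) (hn : n ≠ 0)
    (hdn : d 0 * n 0 + d 1 * n 1 = 0)
    (hv : ∀ t ∈ Set.Icc (0 : ℝ) 1,
      eval (fun i => p i + t * d i) v₁ = 0 ∧ eval (fun i => p i + t * d i) v₂ = 0)
    (hv' : ∀ t ∈ Set.Icc (0 : ℝ) 1,
      eval (fun i => p i + t * d i) (dirDeriv n v₁) = 0 ∧
      eval (fun i => p i + t * d i) (dirDeriv n v₂) = 0)
    (hv'' : ∀ t ∈ Set.Icc (0 : ℝ) 1,
      eval (fun i => p i + t * d i) (dirDeriv n (dirDeriv n v₁)) = 0 ∧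
      eval (fun i => p i + t * d i) (dirDeriv n (dirDeriv n v₂)) = 0)
    (hstokes₁ : -(pderiv 0 (pderiv 0 v₁) + pderiv 1 (pderiv 1 v₁)) + pderiv 0 q = 0)
    (hstokes₂ : -(pderiv 0 (pderiv 0 v₂) + pderiv 1 (pderiv 1 v₂)) + pderiv 1 q = 0)
    (hdiv : pderiv 0 v₁ + pderiv 1 v₂ = 0) :
    v₁ = 0 ∧ v₂ = 0 ∧ ∃ c : ℝ, q = C c := by
  have hdn : d ⬝ᵥ n = 0 := by simpa [dotProduct, Fin.sum_univ_two] using hdn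
  have hΔ₁ : laplacian v₁ = pderiv 0 q := neg_add_eq_zero.mp hstokes₁
  have hΔ₂ : laplacian v₂ = pderiv 1 q := neg_add_eq_zero.mp hstokes₂
  have hdiv : divergence v₁ v₂ = 0 := hdiv
  have h₁ := mem_lineIdeal_of_forall_Icc fun t ht => (hv t ht).1
  have h₂ := mem_lineIdeal_of_forall_Icc fun t ht => (hv t ht).2
  have h₁' := mem_lineIdeal_of_forall_Icc fun t ht => (hv' t ht).1
  have h₂' := mem_lineIdeal_of_forall_Icc fun t ht => (hv' t ht).2
  have h₁'' := mem_lineIdeal_of_forall_Icc fun t ht => (hv'' t ht).1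
  have h₂'' := mem_lineIdeal_of_forall_Icc fun t ht => (hv'' t ht).2
  have hcurl : curl v₁ v₂ = 0 := by
    refine eq_zero_of_laplacian_eq_zero hd hn hdn ?_ (curl_mem_lineIdeal hd hn hdn h₁ h₂ h₁' h₂') ?_
    · rw [laplacian_curl, hΔ₁, hΔ₂, curl_pderiv]
    · rw [dirDeriv_curl]
      exact curl_mem_lineIdeal hd hn hdn h₁' h₂' h₁'' h₂''
  have hv₁ : v₁ = 0 := eq_zero_of_laplacian_eq_zero hd hn hdn
    (by rw [laplacian_eq_pderiv_divergence_sub_pderiv_curl v₁ v₂, hdiv, hcurl]; simp) h₁ h₁'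
  have hv₂ : v₂ = 0 := eq_zero_of_laplacian_eq_zero hd hn hdn
    (by rw [laplacian_eq_pderiv_divergence_add_pderiv_curl v₁ v₂, hdiv, hcurl]; simp) h₂ h₂'
  refine ⟨hv₁, hv₂, _, eq_C_of_forall_pderiv_eq_zero (Fin.forall_fin_two.mpr ⟨?_, ?_⟩)⟩
  · simp [← hΔ₁, hv₁, laplacian]
  · simp [← hΔ₂, hv₂, laplacian]
end

section
/- Let v₁, v₂, q be polynomials in two real variables x, y and set v = (v₁, v₂). Assume that for every x ∈ ℝ and for k = 1, 2 one has v_k(x, 0) = 0, (∂v_k/∂y)(x, 0) = 0 and (∂²v_k/∂y²)(x, 0) = 0. Assume moreover that −Δv + ∇q = 0 and ∂v₁/∂x + ∂v₂/∂y = 0 hold identically on ℝ². Then v₁ and v₂ are identically zero and q is a constant polynomial. -/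
/-!
Write `aₙ, bₙ, cₙ ∈ ℝ[x]` for the restrictions to the x-axis of `∂ᵧⁿ v₁, ∂ᵧⁿ v₂, ∂ᵧⁿ q`.
Since `div v = 0`, the pressure is harmonic, and restricting `Δv₁ = ∂ₓq`, `Δv₂ = ∂ᵧq`, `Δq = 0`
to the axis gives the recurrences
`aₙ'' + aₙ₊₂ = cₙ'`, `bₙ'' + bₙ₊₂ = cₙ₊₁`, `cₙ'' + cₙ₊₂ = 0`.
The data `a₀ = a₁ = a₂ = b₀ = b₁ = b₂ = 0` give `c₀' = c₁ = c₂ = 0`, so every `cₙ₊₁` vanishes,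
and then so does every `aₙ` and `bₙ`. A polynomial is determined by these traces (its Taylor
expansion in `y`), hence `v = 0`, and then `∇q = 0` makes `q` constant.
-/

open MvPolynomial
open scoped Polynomial

theorem Polynomial.eq_zero_of_forall_coeff_zero_iterate_derivative {S : Type*} [Semiring S]
    [IsAddTorsionFree S] {P : S[X]} (h : ∀ n, (derivative^[n] P).coeff 0 = 0) : P = 0 := by
  ext n
  have hn := h n
  rw [coeff_iterate_derivative, zero_add, Nat.descFactorial_self] at hn
  exact (smul_eq_zero.mp hn).resolve_left n.factorial_ne_zero

theorem eq_zero_of_two_step_recurrence {M : Type*} [AddZeroClass M] {D : M → M} (hD : D 0 = 0)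
    {u : ℕ → M} (h : ∀ n, D (u n) + u (n + 2) = 0) (h₀ : u 0 = 0) (h₁ : u 1 = 0) (n : ℕ) :
    u n = 0 := by
  induction n using Nat.twoStepInduction with
  | zero => exact h₀
  | one => exact h₁
  | more n hn _ => simpa [hn, hD] using h n

namespace MvPolynomial

variable {σ R : Type*} [CommRing R]

theorem pderiv_pderiv_comm_s1 (i j : σ) (p : MvPolynomial σ R) :
    pderiv i (pderiv j p) = pderiv j (pderiv i p) := by
  induction p using MvPolynomial.induction_on' with
  | add p q hp hq => simp [hp, hq]
  | monomial s a =>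
    rcases eq_or_ne i j with rfl | hij
    · rfl
    · simp only [pderiv_monomial, Finsupp.tsub_apply,
        Finsupp.single_eq_of_ne hij, Finsupp.single_eq_of_ne hij.symm, tsub_zero]
      rw [tsub_tsub, tsub_tsub, add_comm (Finsupp.single j 1)]
      congr 1
      ring

noncomputable def laplacian : MvPolynomial (Fin 2) R →ₗ[R] MvPolynomial (Fin 2) R :=
  (pderiv 0).toLinearMap ∘ₗ (pderiv 0).toLinearMap +
    (pderiv 1).toLinearMap ∘ₗ (pderiv 1).toLinearMap

theorem laplacian_apply (p : MvPolynomial (Fin 2) R) :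
    laplacian p = pderiv 0 (pderiv 0 p) + pderiv 1 (pderiv 1 p) := rfl

theorem laplacian_pderiv (i : Fin 2) (p : MvPolynomial (Fin 2) R) :
    laplacian (pderiv i p) = pderiv i (laplacian p) := by
  simp only [laplacian_apply, map_add, pderiv_pderiv_comm_s1 i]

theorem laplacian_eq_zero_of_stokes {v₁ v₂ q : MvPolynomial (Fin 2) R}
    (hs₁ : laplacian v₁ = pderiv 0 q) (hs₂ : laplacian v₂ = pderiv 1 q)
    (hdiv : pderiv 0 v₁ + pderiv 1 v₂ = 0) : laplacian q = 0 := by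
  rw [laplacian_apply, ← hs₁, ← hs₂, ← laplacian_pderiv, ← laplacian_pderiv, ← map_add, hdiv,
    map_zero]

noncomputable def restrictXAxis : MvPolynomial (Fin 2) R →ₐ[R] R[X] := aeval ![Polynomial.X, 0]

theorem eval_restrictXAxis (x : R) (p : MvPolynomial (Fin 2) R) :
    (restrictXAxis p).eval x = eval ![x, 0] p := by
  have : (Polynomial.aeval x).comp (restrictXAxis (R := R)) = aeval ![x, 0] := by
    ext i
    fin_cases i <;> simp [restrictXAxis]
  exact DFunLike.congr_fun this p

theorem restrictXAxis_eq_zero [IsDomain R] [Infinite R] {p : MvPolynomial (Fin 2) R}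
    (h : ∀ x, eval ![x, 0] p = 0) : restrictXAxis p = 0 :=
  Polynomial.funext fun x => by rw [eval_restrictXAxis, h, Polynomial.eval_zero]

theorem restrictXAxis_pderiv_zero (p : MvPolynomial (Fin 2) R) :
    restrictXAxis (pderiv 0 p) = Polynomial.derivative (restrictXAxis p) := by
  induction p using MvPolynomial.induction_on with
  | C a => simp [restrictXAxis]
  | add p q hp hq => simp [hp, hq]
  | mul_X p i hp =>
    simp only [restrictXAxis] at hp ⊢
    fin_cases i <;> simp [hp, Polynomial.derivative_mul]; ring

theorem restrictXAxis_equivMvPolynomial (P : R[X][X]) :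
    restrictXAxis (Polynomial.Bivariate.equivMvPolynomial R P) = P.coeff 0 := by
  have : restrictXAxis.comp (Polynomial.Bivariate.equivMvPolynomial R).toAlgHom =
      (Polynomial.aeval (0 : R[X])).restrictScalars R := by
    apply Polynomial.algHom_ext'
    · ext
      simp [restrictXAxis]
    · simp [restrictXAxis]
  rw [Polynomial.coeff_zero_eq_eval_zero]
  exact DFunLike.congr_fun this P

noncomputable def normalTrace (n : ℕ) : MvPolynomial (Fin 2) R →ₗ[R] R[X] :=
  restrictXAxis.toLinearMap ∘ₗ (pderiv 1).toLinearMap ^ n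

theorem normalTrace_apply (n : ℕ) (p : MvPolynomial (Fin 2) R) :
    normalTrace n p = restrictXAxis ((pderiv 1)^[n] p) := by
  simp [normalTrace, Module.End.pow_apply]

theorem normalTrace_pderiv_one (n : ℕ) (p : MvPolynomial (Fin 2) R) :
    normalTrace n (pderiv 1 p) = normalTrace (n + 1) p := by
  rw [normalTrace_apply, normalTrace_apply, Function.iterate_succ_apply]

theorem normalTrace_pderiv_zero (n : ℕ) (p : MvPolynomial (Fin 2) R) :
    normalTrace n (pderiv 0 p) = Polynomial.derivative (normalTrace n p) := by
  have hcomm : Function.Commute (pderiv (R := R) (1 : Fin 2)) (pderiv 0) :=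
    pderiv_pderiv_comm_s1 1 0
  rw [normalTrace_apply, normalTrace_apply, hcomm.iterate_left n p, restrictXAxis_pderiv_zero]

theorem normalTrace_laplacian (n : ℕ) (p : MvPolynomial (Fin 2) R) :
    normalTrace n (laplacian p) =
      Polynomial.derivative^[2] (normalTrace n p) + normalTrace (n + 2) p := by
  rw [laplacian_apply, map_add, normalTrace_pderiv_zero, normalTrace_pderiv_zero,
    normalTrace_pderiv_one, normalTrace_pderiv_one]
  rfl

theorem eq_zero_of_normalTrace_eq_zero [IsDomain R] [CharZero R] {p : MvPolynomial (Fin 2) R}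
    (h : ∀ n, normalTrace n p = 0) : p = 0 := by
  obtain ⟨P, rfl⟩ := (Polynomial.Bivariate.equivMvPolynomial R).surjective p
  have hiter (n : ℕ) : (pderiv 1)^[n] (Polynomial.Bivariate.equivMvPolynomial R P) =
      Polynomial.Bivariate.equivMvPolynomial R (Polynomial.derivative^[n] P) :=
    (Function.Semiconj.iterate_right
      (fun Q => (Polynomial.Bivariate.pderiv_one_equivMvPolynomial Q).symm) n P).symm
  suffices P = 0 by rw [this, map_zero]
  refine Polynomial.eq_zero_of_forall_coeff_zero_iterate_derivative fun n => ?_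
  rw [← restrictXAxis_equivMvPolynomial, ← hiter, ← normalTrace_apply, h]

theorem exists_eq_C_of_pderiv_eq_zero [IsDomain R] [CharZero R] {p : MvPolynomial (Fin 2) R}
    (h₀ : pderiv 0 p = 0) (h₁ : pderiv 1 p = 0) : ∃ c, p = C c := by
  have hconst : Polynomial.derivative (normalTrace 0 p) = 0 := by
    rw [← normalTrace_pderiv_zero, h₀, map_zero]
  refine ⟨(normalTrace 0 p).coeff 0, eq_of_sub_eq_zero (eq_zero_of_normalTrace_eq_zero ?_)⟩
  rintro (_ | n)
  · rw [map_sub, sub_eq_zero, normalTrace_apply (p := C _)]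
    simpa [restrictXAxis] using Polynomial.eq_C_of_derivative_eq_zero hconst
  · rw [map_sub, ← normalTrace_pderiv_one, ← normalTrace_pderiv_one, h₁, pderiv_C, sub_self]

theorem normalTrace_pressure_of_stokes {v₁ v₂ q : MvPolynomial (Fin 2) R}
    (hs₁ : laplacian v₁ = pderiv 0 q) (hs₂ : laplacian v₂ = pderiv 1 q)
    (hdiv : pderiv 0 v₁ + pderiv 1 v₂ = 0)
    (hv : ∀ n < 3, normalTrace n v₁ = 0 ∧ normalTrace n v₂ = 0) :
    Polynomial.derivative (normalTrace 0 q) = 0 ∧ ∀ n, normalTrace (n + 1) q = 0 := by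
  have hharm (n : ℕ) :
      Polynomial.derivative^[2] (normalTrace n q) + normalTrace (n + 2) q = 0 := by
    rw [← normalTrace_laplacian, laplacian_eq_zero_of_stokes hs₁ hs₂ hdiv, map_zero]
  have hc₀ : Polynomial.derivative (normalTrace 0 q) = 0 := by
    have h := normalTrace_laplacian 0 v₁
    rw [hs₁, normalTrace_pderiv_zero, (hv 0 (by norm_num)).1, (hv 2 (by norm_num)).1] at h
    simpa using h
  have hc₁ : normalTrace 1 q = 0 := by
    have h := normalTrace_laplacian 0 v₂
    rw [hs₂, normalTrace_pderiv_one, (hv 0 (by norm_num)).2, (hv 2 (by norm_num)).2] at h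
    simpa using h
  have hc₂ : normalTrace 2 q = 0 := by
    simpa [hc₀] using hharm 0
  exact ⟨hc₀, eq_zero_of_two_step_recurrence (iterate_map_zero _ 2)
    (fun n => hharm (n + 1)) hc₁ hc₂⟩

theorem eq_zero_of_stokes_of_normalTrace_eq_zero [IsDomain R] [CharZero R]
    {v₁ v₂ q : MvPolynomial (Fin 2) R}
    (hs₁ : laplacian v₁ = pderiv 0 q) (hs₂ : laplacian v₂ = pderiv 1 q)
    (hdiv : pderiv 0 v₁ + pderiv 1 v₂ = 0)
    (hv : ∀ n < 3, normalTrace n v₁ = 0 ∧ normalTrace n v₂ = 0) : v₁ = 0 ∧ v₂ = 0 := by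
  obtain ⟨hc₀, hc⟩ := normalTrace_pressure_of_stokes hs₁ hs₂ hdiv hv
  have hv₁ (n : ℕ) :
      Polynomial.derivative^[2] (normalTrace n v₁) + normalTrace (n + 2) v₁ = 0 := by
    rw [← normalTrace_laplacian, hs₁, normalTrace_pderiv_zero]
    cases n with
    | zero => exact hc₀
    | succ n => rw [hc, map_zero]
  have hv₂ (n : ℕ) :
      Polynomial.derivative^[2] (normalTrace n v₂) + normalTrace (n + 2) v₂ = 0 := by
    rw [← normalTrace_laplacian, hs₂, normalTrace_pderiv_one, hc]
  have hD : Polynomial.derivative^[2] (0 : R[X]) = 0 := iterate_map_zero _ 2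
  exact ⟨eq_zero_of_normalTrace_eq_zero <| eq_zero_of_two_step_recurrence hD hv₁
      (hv 0 (by norm_num)).1 (hv 1 (by norm_num)).1,
    eq_zero_of_normalTrace_eq_zero <| eq_zero_of_two_step_recurrence hD hv₂
      (hv 0 (by norm_num)).2 (hv 1 (by norm_num)).2⟩

end MvPolynomial

/-- Lemma 3.1 of the paper in the Cartesian coordinates where the edge lies on the x-axis:
if the polynomial velocity field `v = (v₁, v₂)` vanishes on the x-axis together with its
first and second derivatives in `y`, and `−Δv + ∇q = 0`, `div v = 0` hold identically,
then `v = 0` and `q` is constant. -/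
theorem polynomial_stokes_vanishing_on_x_axis
    (v₁ v₂ q : MvPolynomial (Fin 2) ℝ)
    (h0 : ∀ x : ℝ, eval ![x, 0] v₁ = 0 ∧ eval ![x, 0] v₂ = 0)
    (h1 : ∀ x : ℝ, eval ![x, 0] (pderiv 1 v₁) = 0 ∧ eval ![x, 0] (pderiv 1 v₂) = 0)
    (h2 : ∀ x : ℝ, eval ![x, 0] (pderiv 1 (pderiv 1 v₁)) = 0 ∧
      eval ![x, 0] (pderiv 1 (pderiv 1 v₂)) = 0)
    (hstokes₁ : -(pderiv 0 (pderiv 0 v₁) + pderiv 1 (pderiv 1 v₁)) + pderiv 0 q = 0)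
    (hstokes₂ : -(pderiv 0 (pderiv 0 v₂) + pderiv 1 (pderiv 1 v₂)) + pderiv 1 q = 0)
    (hdiv : pderiv 0 v₁ + pderiv 1 v₂ = 0) :
    v₁ = 0 ∧ v₂ = 0 ∧ ∃ c : ℝ, q = C c := by
  have hs₁ : laplacian v₁ = pderiv 0 q := neg_add_eq_zero.mp hstokes₁
  have hs₂ : laplacian v₂ = pderiv 1 q := neg_add_eq_zero.mp hstokes₂
  have hv : ∀ n < 3, normalTrace n v₁ = 0 ∧ normalTrace n v₂ = 0 := by
    intro n hn
    have h : ∀ x : ℝ, eval ![x, 0] ((pderiv 1)^[n] v₁) = 0 ∧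
        eval ![x, 0] ((pderiv 1)^[n] v₂) = 0 := by
      interval_cases n
      exacts [h0, h1, h2]
    rw [normalTrace_apply, normalTrace_apply]
    exact ⟨restrictXAxis_eq_zero fun x => (h x).1, restrictXAxis_eq_zero fun x => (h x).2⟩
  obtain ⟨rfl, rfl⟩ := eq_zero_of_stokes_of_normalTrace_eq_zero hs₁ hs₂ hdiv hv
  refine ⟨rfl, rfl, exists_eq_C_of_pderiv_eq_zero ?_ ?_⟩
  · simpa using hs₁.symm
  · simpa using hs₂.symm
end

section
/- Let a, b, q : ℕ × ℕ → ℝ be families of real numbers satisfying, for all i, j ≥ 0, the two relations −(i+2)(i+1)·a_{(i+2)j} − (j+2)(j+1)·a_{i(j+2)} + (i+1)·q_{(i+1)j} = 0 and −(i+2)(i+1)·b_{(i+2)j} − (j+2)(j+1)·b_{i(j+2)} + (j+1)·q_{i(j+1)} = 0. Then for all i, j ≥ 0 one has (i+2)·a_{(i+2)(j+1)} + ((j+3)(j+2)/(i+1))·a_{i(j+3)} = ((i+3)(i+2)/(j+1))·b_{(i+3)j} + (j+2)·b_{(i+1)(j+2)}. -/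
/-- Eliminating the pressure coefficients from the two Laplacian recurrences in the proof of
Lemma 3.1 of the paper. -/
theorem pressure_elimination_identity (a b q : ℕ × ℕ → ℝ)
    (h₁ : ∀ i j : ℕ,
      -(((i : ℝ) + 2) * ((i : ℝ) + 1)) * a (i + 2, j)
        - ((j : ℝ) + 2) * ((j : ℝ) + 1) * a (i, j + 2)
        + ((i : ℝ) + 1) * q (i + 1, j) = 0)
    (h₂ : ∀ i j : ℕ,
      -(((i : ℝ) + 2) * ((i : ℝ) + 1)) * b (i + 2, j)
        - ((j : ℝ) + 2) * ((j : ℝ) + 1) * b (i, j + 2)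
        + ((j : ℝ) + 1) * q (i, j + 1) = 0) :
    ∀ i j : ℕ,
      ((i : ℝ) + 2) * a (i + 2, j + 1)
        + ((j : ℝ) + 3) * ((j : ℝ) + 2) / ((i : ℝ) + 1) * a (i, j + 3)
      = ((i : ℝ) + 3) * ((i : ℝ) + 2) / ((j : ℝ) + 1) * b (i + 3, j)
        + ((j : ℝ) + 2) * b (i + 1, j + 2) := by
  intro i j
  have H1 := h₁ i (j + 1)
  have H2 := h₂ (i + 1) j
  push_cast at H1 H2
  have hi : ((i : ℝ) + 1) ≠ 0 := by positivity
  have hj : ((j : ℝ) + 1) ≠ 0 := by positivity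
  have h3 : (i + 1 + 2 : ℕ) = i + 3 := by ring
  have h4 : (j + 1 + 2 : ℕ) = j + 3 := by ring
  rw [h4] at H1
  rw [h3] at H2
  field_simp
  nlinarith [H1, H2, mul_pos (by positivity : (0:ℝ) < (i:ℝ)+1) (by positivity : (0:ℝ) < (j:ℝ)+1)]
end

section
/- Let a, b, q : ℕ × ℕ → ℝ satisfy, for all i, j ≥ 0, the three relations: −(i+2)(i+1)·a_{(i+2)j} − (j+2)(j+1)·a_{i(j+2)} + (i+1)·q_{(i+1)j} = 0; −(i+2)(i+1)·b_{(i+2)j} − (j+2)(j+1)·b_{i(j+2)} + (j+1)·q_{i(j+1)} = 0; and (i+1)·a_{(i+1)j} + (j+1)·b_{i(j+1)} = 0. Assume moreover that a_{ij} = b_{ij} = 0 for all i ≥ 0 and all j ∈ {0, 1, 2}. Then a_{ij} = b_{ij} = 0 for all i, j ≥ 0, and q_{ij} = 0 for all (i, j) with i + j ≥ 1. -/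
/-- The coefficient-level core of the proof of Lemma 3.1 of the paper: the Stokes recurrences
together with the vanishing of all coefficients with `y`-degree at most `2` force all velocity
coefficients to vanish and all pressure coefficients of positive total degree to vanish. -/
theorem stokes_coefficients_all_vanish (a b q : ℕ × ℕ → ℝ)
    (h₁ : ∀ i j : ℕ,
      -(((i : ℝ) + 2) * ((i : ℝ) + 1)) * a (i + 2, j)
        - ((j : ℝ) + 2) * ((j : ℝ) + 1) * a (i, j + 2)
        + ((i : ℝ) + 1) * q (i + 1, j) = 0)
    (h₂ : ∀ i j : ℕ,
      -(((i : ℝ) + 2) * ((i : ℝ) + 1)) * b (i + 2, j)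
        - ((j : ℝ) + 2) * ((j : ℝ) + 1) * b (i, j + 2)
        + ((j : ℝ) + 1) * q (i, j + 1) = 0)
    (h₃ : ∀ i j : ℕ,
      ((i : ℝ) + 1) * a (i + 1, j) + ((j : ℝ) + 1) * b (i, j + 1) = 0)
    (h0 : ∀ i : ℕ, ∀ j ∈ ({0, 1, 2} : Set ℕ), a (i, j) = 0 ∧ b (i, j) = 0) :
    (∀ i j : ℕ, a (i, j) = 0 ∧ b (i, j) = 0) ∧
    (∀ i j : ℕ, 1 ≤ i + j → q (i, j) = 0) := by
  have key : ∀ j i : ℕ, a (i, j) = 0 ∧ b (i, j) = 0 := by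
    intro j
    induction j using Nat.strong_induction_on with
    | _ j ih =>
      match j with
      | 0 => exact fun i => h0 i 0 (by simp)
      | 1 => exact fun i => h0 i 1 (by simp)
      | 2 => exact fun i => h0 i 2 (by simp)
      | (k + 3) =>
        intro i
        -- q at y-degree ≥ 1 up to usable range vanishes
        have hq : ∀ i' j' : ℕ, j' ≤ k → q (i', j' + 1) = 0 := by
          intro i' j' hj'
          have h := h₂ i' j'
          have hb1 := (ih j' (by omega) (i' + 2)).2
          have hb2 := (ih (j' + 2) (by omega) i').2
          rw [hb1, hb2] at h
          have hne : ((j' : ℝ) + 1) ≠ 0 := by positivity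
          have : ((j' : ℝ) + 1) * q (i', j' + 1) = 0 := by linarith
          exact (mul_eq_zero.mp this).resolve_left hne
        have hb : b (i, k + 3) = 0 := by
          have h := h₃ i (k + 2)
          have ha' := (ih (k + 2) (by omega) (i + 1)).1
          rw [ha'] at h
          have hne : (((k + 2 : ℕ) : ℝ) + 1) ≠ 0 := by positivity
          have : (((k + 2 : ℕ) : ℝ) + 1) * b (i, k + 2 + 1) = 0 := by linarith
          exact (mul_eq_zero.mp this).resolve_left hne
        have ha : a (i, k + 3) = 0 := by
          have h := h₁ i (k + 1)
          have ha' := (ih (k + 1) (by omega) (i + 2)).1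
          have hq' := hq (i + 1) k le_rfl
          rw [ha', hq'] at h
          have hne : ((((k + 1 : ℕ) : ℝ) + 2) * (((k + 1 : ℕ) : ℝ) + 1)) ≠ 0 := by positivity
          have : ((((k + 1 : ℕ) : ℝ) + 2) * (((k + 1 : ℕ) : ℝ) + 1)) * a (i, k + 1 + 2) = 0 := by
            linarith
          exact (mul_eq_zero.mp this).resolve_left hne
        exact ⟨ha, hb⟩
  refine ⟨fun i j => key j i, fun i j hij => ?_⟩
  match i, j with
  | i, (j' + 1) =>
    have h := h₂ i j'
    have hb1 := (key j' (i + 2)).2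
    have hb2 := (key (j' + 2) i).2
    rw [hb1, hb2] at h
    have hne : ((j' : ℝ) + 1) ≠ 0 := by positivity
    have : ((j' : ℝ) + 1) * q (i, j' + 1) = 0 := by linarith
    exact (mul_eq_zero.mp this).resolve_left hne
  | (i' + 1), 0 =>
    have h := h₁ i' 0
    have ha1 := (key 0 (i' + 2)).1
    have ha2 := (key 2 i').1
    rw [ha1, ha2] at h
    have hne : ((i' : ℝ) + 1) ≠ 0 := by positivity
    have : ((i' : ℝ) + 1) * q (i' + 1, 0) = 0 := by
      push_cast at h ⊢; linarith
    exact (mul_eq_zero.mp this).resolve_left hne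
end

section
/- Let m ≥ 2 be an integer and let a, b, q : ℕ × ℕ → ℝ satisfy, for all i, j ≥ 0, the three relations: −(i+2)(i+1)·a_{(i+2)j} − (j+2)(j+1)·a_{i(j+2)} + (i+1)·q_{(i+1)j} = 0; −(i+2)(i+1)·b_{(i+2)j} − (j+2)(j+1)·b_{i(j+2)} + (j+1)·q_{i(j+1)} = 0; and (i+1)·a_{(i+1)j} + (j+1)·b_{i(j+1)} = 0. If a_{ij} = b_{ij} = 0 for all i ≥ 0 and all j with 0 ≤ j ≤ m, then a_{i(m+1)} = b_{i(m+1)} = 0 for all i ≥ 0. -/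
/-- The inductive step `(S_m) ⟹ (S_{m+1})` in the proof of Lemma 3.1 of the paper. -/
theorem stokes_coefficients_inductive_step (m : ℕ) (hm : 2 ≤ m) (a b q : ℕ × ℕ → ℝ)
    (h₁ : ∀ i j : ℕ,
      -(((i : ℝ) + 2) * ((i : ℝ) + 1)) * a (i + 2, j)
        - ((j : ℝ) + 2) * ((j : ℝ) + 1) * a (i, j + 2)
        + ((i : ℝ) + 1) * q (i + 1, j) = 0)
    (h₂ : ∀ i j : ℕ,
      -(((i : ℝ) + 2) * ((i : ℝ) + 1)) * b (i + 2, j)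
        - ((j : ℝ) + 2) * ((j : ℝ) + 1) * b (i, j + 2)
        + ((j : ℝ) + 1) * q (i, j + 1) = 0)
    (h₃ : ∀ i j : ℕ,
      ((i : ℝ) + 1) * a (i + 1, j) + ((j : ℝ) + 1) * b (i, j + 1) = 0)
    (hSm : ∀ i : ℕ, ∀ j ≤ m, a (i, j) = 0 ∧ b (i, j) = 0) :
    ∀ i : ℕ, a (i, m + 1) = 0 ∧ b (i, m + 1) = 0 := by
  obtain ⟨k, rfl⟩ : ∃ k, m = k + 2 := ⟨m - 2, by omega⟩
  intro i
  -- b part: divergence relation at (i, m)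
  have hb : b (i, k + 2 + 1) = 0 := by
    have h3 := h₃ i (k + 2)
    have ha := (hSm (i + 1) (k + 2) le_rfl).1
    rw [ha] at h3
    push_cast at h3
    nlinarith [h3, Nat.cast_nonneg (α := ℝ) k]
  refine ⟨?_, hb⟩
  -- pressure vanishes: q (i+1, k+1) = 0, from h₂ at (i+1, k)
  have hq : q (i + 1, k + 1) = 0 := by
    have h2 := h₂ (i + 1) k
    have e1 : (i + 1 + 2, k) = (i + 3, k) := by norm_num
    rw [e1, (hSm (i + 3) k (by omega)).2, (hSm (i + 1) (k + 2) le_rfl).2] at h2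
    push_cast at h2
    nlinarith [h2, Nat.cast_nonneg (α := ℝ) k]
  -- a part: h₁ at (i, k+1)
  have h1 := h₁ i (k + 1)
  have e2 : (i, k + 1 + 2) = (i, k + 2 + 1) := by norm_num
  rw [e2, (hSm (i + 2) (k + 1) (by omega)).1, hq] at h1
  push_cast at h1
  have h1' : (((k : ℝ) + 1 + 2) * ((k : ℝ) + 1 + 1)) * a (i, k + 2 + 1) = 0 := by
    linarith [h1]
  have hc : (((k : ℝ) + 1 + 2) * ((k : ℝ) + 1 + 1)) ≠ 0 := by positivity
  exact (mul_eq_zero.mp h1').resolve_left hc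
end
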